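/- arXiv:2504.05028 — 2 statements merged into one kernel-verified Lean document; each statement's English description precedes it below -/
import Mathlib

section
/- Let n > 0 and let H : ℝ → ℝ be a C¹ function and ρ : ℝ → ℝ continuous with H'(t) = -(ρ(t) + H(t)²/n) for all t ∈ ℝ, where liminf_{t→+∞} ∫₀ᵗ ρ(s) ds ≥ 0 and liminf_{t→+∞} ∫₀ᵗ ρ(-s) ds ≥ 0 (the averaged condition in both time directions, noting that reversing time replaces H by -H). Then H(t) = 0 for all t ∈ ℝ. -/
/-!
Write `r t = ∫₀ᵗ ρ` and `W = H + r`, so that `W' = -H²/n ≤ 0`. If `W t₀ < 0`, then for large `t`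
the bound `liminf r ≥ 0` keeps `K = -W - ε` positive with `H ≤ -K`, hence `K' = H²/n ≥ K²/n`,
and `K` blows up in finite time. So `W ≥ 0`; the same argument for `t ↦ -H (-t)`, whose
primitive term is `∫₀ᵗ ρ(-s) ds`, gives `W ≤ 0`. Then `W ≡ 0`, so `H² = -n W' = 0`.
-/

open Filter

theorem Filter.eventually_neg_lt_of_liminf_nonneg {r : ℝ → ℝ}
    (hr : (0 : EReal) ≤ liminf (fun t => (r t : EReal)) atTop) {ε : ℝ} (hε : 0 < ε) :
    ∀ᶠ t in atTop, -ε < r t := by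
  have hlt : ((-ε : ℝ) : EReal) < liminf (fun t => (r t : EReal)) atTop :=
    lt_of_lt_of_le (by exact_mod_cast neg_neg_of_pos hε) hr
  filter_upwards [eventually_lt_of_lt_liminf hlt] with t ht
  exact_mod_cast ht

theorem false_of_pos_of_sq_div_le_deriv {n T : ℝ} (hn : 0 < n) {K K' : ℝ → ℝ}
    (hK : ∀ t, T ≤ t → HasDerivAt K (K' t) t) (hpos : ∀ t, T ≤ t → 0 < K t)
    (hle : ∀ t, T ≤ t → K t ^ 2 / n ≤ K' t) : False := by
  have hφ : ∀ t, T ≤ t →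
      HasDerivAt (fun t => (K t)⁻¹ + t / n) (-K' t / K t ^ 2 + 1 / n) t := fun t ht =>
    ((hK t ht).inv (hpos t ht).ne').add ((hasDerivAt_id t).div_const n)
  have hanti : AntitoneOn (fun t => (K t)⁻¹ + t / n) (Set.Ici T) := by
    refine antitoneOn_of_hasDerivWithinAt_nonpos (convex_Ici T)
      (fun t ht => (hφ t ht).continuousAt.continuousWithinAt)
      (fun t ht => (hφ t (le_of_lt (by simpa using ht))).hasDerivWithinAt) fun t ht => ?_
    have ht : T ≤ t := le_of_lt (by simpa using ht)
    have hK2 : 0 < K t ^ 2 := pow_pos (hpos t ht) 2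
    have : 1 / n ≤ K' t / K t ^ 2 := by
      rw [le_div_iff₀ hK2]
      linarith [hle t ht, show 1 / n * K t ^ 2 = K t ^ 2 / n by ring]
    linarith [neg_div (K t ^ 2) (K' t)]
  -- `1/K + t/n` does not increase, so after time `n / K T` the positive term `1/K` would be `≤ 0`.
  have hKT := hpos T le_rfl
  set t₁ := T + n * (K T)⁻¹
  have ht₁ : T ≤ t₁ := le_add_of_nonneg_right (by positivity)
  have hmono : (K t₁)⁻¹ + t₁ / n ≤ (K T)⁻¹ + T / n := hanti Set.self_mem_Ici ht₁ ht₁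
  have ht₁n : t₁ / n = T / n + (K T)⁻¹ := by
    rw [add_div, mul_div_cancel_left₀ _ hn.ne']
  have := inv_pos.2 (hpos t₁ ht₁)
  linarith

theorem riccati_nonneg {n : ℝ} (hn : 0 < n) {H r : ℝ → ℝ}
    (hW : ∀ t, HasDerivAt (fun t => H t + r t) (-(H t ^ 2 / n)) t)
    (hr : (0 : EReal) ≤ liminf (fun t => (r t : EReal)) atTop) (t₀ : ℝ) :
    0 ≤ H t₀ + r t₀ := by
  by_contra! hneg
  set ε := -(H t₀ + r t₀) / 3 with hε_def
  have hε : 0 < ε := by linarith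
  obtain ⟨T, hT⟩ := eventually_atTop.1 (eventually_neg_lt_of_liminf_nonneg hr hε)
  have hanti : Antitone fun t => H t + r t :=
    antitone_of_hasDerivAt_nonpos hW fun t => neg_nonpos.2 (div_nonneg (sq_nonneg _) hn.le)
  have hbound : ∀ t, max t₀ T ≤ t → 0 < -(H t + r t) - ε ∧ -(H t + r t) - ε ≤ -H t := by
    intro t ht
    have h₁ := hanti (le_of_max_le_left ht)
    have h₂ := hT t (le_of_max_le_right ht)
    constructor <;> linarith
  refine false_of_pos_of_sq_div_le_deriv hn (K := fun t => -(H t + r t) - ε)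
    (K' := fun t => H t ^ 2 / n) (T := max t₀ T)
    (fun t _ => ((hW t).neg.sub_const ε).congr_deriv (neg_neg _))
    (fun t ht => (hbound t ht).1) fun t ht => ?_
  obtain ⟨hpos, hle⟩ := hbound t ht
  have hsq := pow_le_pow_left₀ hpos.le hle 2
  rw [neg_sq] at hsq
  exact div_le_div_of_nonneg_right hsq hn.le

theorem riccati_nonpos {n : ℝ} (hn : 0 < n) {H r : ℝ → ℝ}
    (hW : ∀ t, HasDerivAt (fun t => H t + r t) (-(H t ^ 2 / n)) t)
    (hr : (0 : EReal) ≤ liminf (fun t => ((-r (-t) : ℝ) : EReal)) atTop) (t₀ : ℝ) :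
    H t₀ + r t₀ ≤ 0 := by
  have hWrev : ∀ t, HasDerivAt (fun t => -H (-t) + -r (-t)) (-((-H (-t)) ^ 2 / n)) t := by
    intro t
    have hfun : (fun t => -H (-t) + -r (-t)) = -((fun t => H t + r t) ∘ Neg.neg) := by
      funext s
      simp only [Pi.neg_apply, Function.comp_apply]
      ring
    rw [hfun]
    exact ((hW (-t)).comp t (hasDerivAt_neg t)).neg.congr_deriv (by ring)
  have := riccati_nonneg hn hWrev hr (-t₀)
  simp only [neg_neg] at this
  linarith

/-- If `H` solves `H' = -(ρ + H²/n)` on all of `ℝ`, with the averaged condition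
`liminf_{t→∞} ∫₀ᵗ ρ(s) ds ≥ 0` in both time directions, then `H ≡ 0`. -/
theorem stmt_4 (n : ℝ) (hn : 0 < n) (H ρ : ℝ → ℝ)
    (hρc : Continuous ρ)
    (hH : ∀ t : ℝ, HasDerivAt H (-(ρ t + H t ^ 2 / n)) t)
    (hliminfFwd : (0 : EReal) ≤
      Filter.liminf (fun t : ℝ => ((∫ s in (0:ℝ)..t, ρ s : ℝ) : EReal)) Filter.atTop)
    (hliminfBwd : (0 : EReal) ≤
      Filter.liminf (fun t : ℝ => ((∫ s in (0:ℝ)..t, ρ (-s) : ℝ) : EReal)) Filter.atTop) :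
    ∀ t : ℝ, H t = 0 := by
  set r : ℝ → ℝ := fun t => ∫ s in (0:ℝ)..t, ρ s
  have hW : ∀ t, HasDerivAt (fun t => H t + r t) (-(H t ^ 2 / n)) t := fun t =>
    ((hH t).add (hρc.integral_hasStrictDerivAt 0 t).hasDerivAt).congr_deriv (by ring)
  have hliminfRev : (0 : EReal) ≤ liminf (fun t => ((-r (-t) : ℝ) : EReal)) atTop := by
    convert hliminfBwd using 4 with t
    show -(∫ s in (0:ℝ)..-t, ρ s) = _
    rw [intervalIntegral.integral_comp_neg, neg_zero, intervalIntegral.integral_symm (-t) 0,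
      neg_neg]
  have hW0 : ∀ t, H t + r t = 0 := fun t => le_antisymm
    (riccati_nonpos hn hW hliminfRev t)
    (riccati_nonneg hn hW hliminfFwd t)
  intro t
  have hderiv := hW t
  rw [show (fun t => H t + r t) = fun _ => 0 from funext hW0] at hderiv
  simpa [hn.ne'] using hderiv.unique (hasDerivAt_const t 0)
end

section
/- Let n > 0, ε > 0, r₀ > 0, and let H : [0, T) → ℝ be C¹ and ρ : [0, T) → ℝ continuous with H' = -(ρ + H²/n), H(r) < 0 for all r ∈ [0, T), and ∫₀ʳ ρ(s) ds ≥ -ε for all r ∈ [r₀, T), with H(0) < -ε. Then, setting Q(r) = ∫₀ʳ H(s)²/n ds, we have Q(r₀) > 0 and T ≤ r₀ + n/Q(r₀). -/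
/-!
Integrating the Riccati equation `H' = -(ρ + H²/n)` from `0` and using `∫₀ʳ ρ ≥ -ε > H 0` gives
`0 ≤ Q < -H` on `[r₀, T)`, where `Q r = ∫₀ʳ H²/n`; hence `Q' = H²/n ≥ Q²/n` there. For such a
supersolution of `Q' = Q²/n` with `Q r₀ > 0`, the function `φ r = r + n / Q r` is nonincreasing on
`[r₀, T)` and exceeds `r`, so `r < φ r ≤ φ r₀` for all `r < T`, i.e. `T ≤ r₀ + n / Q r₀`.
-/

open Set MeasureTheory

section IntervalIntegral

variable {E : Type*} [NormedAddCommGroup E] {f : ℝ → E} {a b T : ℝ}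

theorem ContinuousOn.intervalIntegrable_of_Ico (hf : ContinuousOn f (Ico a T)) (hab : a ≤ b)
    (hbT : b < T) : IntervalIntegrable f volume a b :=
  (hf.mono (Icc_subset_Ico_right hbT)).intervalIntegrable_of_Icc hab

theorem ContinuousOn.hasDerivAt_integral_of_Ico [NormedSpace ℝ E] [CompleteSpace E]
    (hf : ContinuousOn f (Ico a T)) (hb : b ∈ Ioo a T) :
    HasDerivAt (fun u => ∫ s in a..u, f s) (f b) b := by
  have hf' : ContinuousOn f (Ioo a T) := hf.mono Ioo_subset_Ico_self
  exact intervalIntegral.integral_hasDerivAt_right (hf.intervalIntegrable_of_Ico hb.1.le hb.2)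
    (hf'.stronglyMeasurableAtFilter isOpen_Ioo b hb) (hf'.continuousAt (isOpen_Ioo.mem_nhds hb))

end IntervalIntegral

theorem le_add_div_of_sq_div_le_deriv {Q q : ℝ → ℝ} {a T c : ℝ} (hc : 0 < c) (hQa : 0 < Q a)
    (hQ : ∀ r ∈ Ico a T, HasDerivAt Q (q r) r) (hq : ∀ r ∈ Ico a T, Q r ^ 2 / c ≤ q r) :
    T ≤ a + c / Q a := by
  have hQcont : ContinuousOn Q (Ico a T) := fun r hr => (hQ r hr).continuousAt.continuousWithinAt
  have hQmono : MonotoneOn Q (Ico a T) :=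
    monotoneOn_of_hasDerivWithinAt_nonneg (convex_Ico a T) hQcont
      (fun r hr => (hQ r (interior_subset hr)).hasDerivWithinAt)
      (fun r hr => (div_nonneg (sq_nonneg _) hc.le).trans (hq r (interior_subset hr)))
  have hQpos : ∀ r ∈ Ico a T, 0 < Q r := fun r hr =>
    hQa.trans_le (hQmono ⟨le_rfl, hr.1.trans_lt hr.2⟩ hr hr.1)
  set φ : ℝ → ℝ := fun r => r + c / Q r
  have hφ : ∀ r ∈ Ico a T, HasDerivAt φ (1 + (0 * Q r - c * q r) / Q r ^ 2) r := fun r hr =>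
    (hasDerivAt_id r).add ((hasDerivAt_const r c).div (hQ r hr) (hQpos r hr).ne')
  have hφ_nonpos : ∀ r ∈ Ico a T, 1 + (0 * Q r - c * q r) / Q r ^ 2 ≤ 0 := by
    intro r hr
    rw [zero_mul, zero_sub, neg_div, ← sub_eq_add_neg, sub_nonpos,
      one_le_div (pow_pos (hQpos r hr) 2)]
    linarith [(div_le_iff₀ hc).1 (hq r hr)]
  have hφanti : AntitoneOn φ (Ico a T) :=
    antitoneOn_of_hasDerivWithinAt_nonpos (convex_Ico a T)
      (fun r hr => (hφ r hr).continuousAt.continuousWithinAt)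
      (fun r hr => (hφ r (interior_subset hr)).hasDerivWithinAt)
      (fun r hr => hφ_nonpos r (interior_subset hr))
  by_contra! hT
  have hb : a + c / Q a ∈ Ico a T := ⟨le_add_of_nonneg_right (div_pos hc hQa).le, hT⟩
  have hφb : φ (a + c / Q a) ≤ φ a := hφanti ⟨le_rfl, hb.1.trans_lt hT⟩ hb hb.1
  have := div_pos hc (hQpos _ hb)
  simp only [φ] at hφb
  linarith

theorem integral_sq_div_lt_neg_of_riccati {n ε T r : ℝ} {H ρ : ℝ → ℝ}
    (hρ : ContinuousOn ρ (Ico 0 T))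
    (hH : ∀ r ∈ Ico (0:ℝ) T, HasDerivAt H (-(ρ r + H r ^ 2 / n)) r)
    (hH0 : H 0 < -ε) (hr : r ∈ Ico 0 T) (hρr : -ε ≤ ∫ s in (0:ℝ)..r, ρ s) :
    ∫ s in (0:ℝ)..r, H s ^ 2 / n < -H r := by
  have hHcont : ContinuousOn H (Ico 0 T) := fun r hr => (hH r hr).continuousAt.continuousWithinAt
  have hρi := hρ.intervalIntegrable_of_Ico hr.1 hr.2
  have hfi : IntervalIntegrable (fun s => H s ^ 2 / n) volume 0 r :=
    ((hHcont.pow 2).div_const n).intervalIntegrable_of_Ico hr.1 hr.2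
  have hftc : H r - H 0 = -((∫ s in (0:ℝ)..r, ρ s) + ∫ s in (0:ℝ)..r, H s ^ 2 / n) := by
    rw [← intervalIntegral.integral_add hρi hfi, ← intervalIntegral.integral_neg]
    refine (intervalIntegral.integral_eq_sub_of_hasDerivAt (fun s hs => hH s ?_)
      (hρi.add hfi).neg).symm
    rw [uIcc_of_le hr.1] at hs
    exact Icc_subset_Ico_right hr.2 hs
  linarith

theorem stmt_14_general (n ε r₀ T : ℝ) (hn : 0 < n)
    (hr₀ : 0 < r₀) (hr₀T : r₀ < T)
    (H ρ : ℝ → ℝ)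
    (hρ : ContinuousOn ρ (Set.Ico 0 T))
    (hH : ∀ r ∈ Set.Ico (0:ℝ) T, HasDerivAt H (-(ρ r + H r ^ 2 / n)) r)
    (hHneg : ∀ r ∈ Set.Ico (0:ℝ) T, H r < 0)
    (hH0 : H 0 < -ε)
    (hint : ∀ r ∈ Set.Ico r₀ T, -ε ≤ ∫ s in (0:ℝ)..r, ρ s) :
    0 < (∫ s in (0:ℝ)..r₀, H s ^ 2 / n) ∧
      T ≤ r₀ + n / ∫ s in (0:ℝ)..r₀, H s ^ 2 / n := by
  have hHcont : ContinuousOn H (Ico 0 T) := fun r hr => (hH r hr).continuousAt.continuousWithinAt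
  have hfcont : ContinuousOn (fun s => H s ^ 2 / n) (Ico 0 T) := (hHcont.pow 2).div_const n
  have hQr₀ : 0 < ∫ s in (0:ℝ)..r₀, H s ^ 2 / n :=
    intervalIntegral.intervalIntegral_pos_of_pos_on (hfcont.intervalIntegrable_of_Ico hr₀.le hr₀T)
      (fun s hs => div_pos (sq_pos_of_neg (hHneg s ⟨hs.1.le, hs.2.trans hr₀T⟩)) hn) hr₀
  refine ⟨hQr₀, le_add_div_of_sq_div_le_deriv
    (Q := fun r => ∫ s in (0:ℝ)..r, H s ^ 2 / n) hn hQr₀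
    (fun r hr => hfcont.hasDerivAt_integral_of_Ico ⟨hr₀.trans_le hr.1, hr.2⟩) (fun r hr => ?_)⟩
  have hr0 : r ∈ Ico 0 T := ⟨hr₀.le.trans hr.1, hr.2⟩
  have hQ_lt := integral_sq_div_lt_neg_of_riccati hρ hH hH0 hr0 (hint r hr)
  have hQ_nonneg : 0 ≤ ∫ s in (0:ℝ)..r, H s ^ 2 / n :=
    intervalIntegral.integral_nonneg hr0.1 fun s _ => by positivity
  exact div_le_div_of_nonneg_right (by nlinarith) hn.le

/-- Combined quantitative claim of Theorem 2.4: if `H' = -(ρ + H²/n)` on `[0,T)`,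
`H < 0` on `[0,T)`, `H 0 < -ε`, and `∫₀ʳ ρ ≥ -ε` for `r ∈ [r₀, T)`, then
`Q r₀ = ∫₀^{r₀} H²/n > 0` and `T ≤ r₀ + n / Q r₀`. -/
theorem stmt_14 (n ε r₀ T : ℝ) (hn : 0 < n) (hε : 0 < ε)
    (hr₀ : 0 < r₀) (hr₀T : r₀ < T)
    (H ρ : ℝ → ℝ)
    (hρ : ContinuousOn ρ (Set.Ico 0 T))
    (hH : ∀ r ∈ Set.Ico (0:ℝ) T, HasDerivAt H (-(ρ r + H r ^ 2 / n)) r)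
    (hHneg : ∀ r ∈ Set.Ico (0:ℝ) T, H r < 0)
    (hH0 : H 0 < -ε)
    (hint : ∀ r ∈ Set.Ico r₀ T, -ε ≤ ∫ s in (0:ℝ)..r, ρ s) :
    0 < (∫ s in (0:ℝ)..r₀, H s ^ 2 / n) ∧
      T ≤ r₀ + n / ∫ s in (0:ℝ)..r₀, H s ^ 2 / n :=
  stmt_14_general n ε r₀ T hn hr₀ hr₀T H ρ hρ hH hHneg hH0 hint
end
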